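/- arXiv:1405.1900 — 2 statements merged into one kernel-verified Lean document; each statement's English description precedes it below -/
import Mathlib

section
/- Let G be a finite abelian group with trivial character χ₁ and variables x_g ∈ C. If Θ(G) = ∏_{χ∈Ĝ} Σ_{g∈G} χ(g) x_g ≠ 0, then the element α = Σ_{g∈G} x_g g is invertible in C[G] and α^{-1} = (1/Θ(G)) · ∏_{χ∈Ĝ\{χ₁}} ( Σ_{g∈G} χ(g) x_g g ). -/
/-!
Twisting by a character `ψ`, `g ↦ ψ g • g`, is an algebra endomorphism of `k[G]` that sends the
twist of `α` by `χ` to its twist by `χ * ψ`. Hence the norm `∏_χ (twist χ α)` is fixed by every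
twist; since characters separate the points of `G`, it is supported at `1`, i.e. it is the scalar
`Θ` read off by the augmentation. Removing the factor `χ = 1`, which is `α` itself, leaves
`Θ • α⁻¹`.
-/

theorem MonoidHom.isUnit {G M : Type*} [CommGroup G] [CommMonoid M] (ψ : G →* M) : IsUnit ψ :=
  isUnit_iff_exists_inv.2 ⟨ψ.comp invMonoidHom, by ext g; simp [← map_mul]⟩

namespace MonoidAlgebra

variable {k G : Type*} [CommRing k] [CommGroup G]

noncomputable def twist (ψ : G →* k) : MonoidAlgebra k G →ₐ[k] MonoidAlgebra k G :=
  lift k (MonoidAlgebra k G) G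
    { toFun g := single g (ψ g)
      map_one' := by simp [one_def]
      map_mul' g h := by simp [single_mul_single] }

theorem twist_single (ψ : G →* k) (g : G) (a : k) :
    twist ψ (single g a) = single g (ψ g * a) := by
  simp [twist, lift_single, smul_single, mul_comm]

theorem twist_one : twist (1 : G →* k) = AlgHom.id k (MonoidAlgebra k G) := by
  ext g
  simp [twist_single]

theorem twist_twist (ψ χ : G →* k) (f : MonoidAlgebra k G) :
    twist ψ (twist χ f) = twist (χ * ψ) f := by
  rw [← AlgHom.comp_apply]
  congr 1
  ext g
  simp [twist_single, mul_comm]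

theorem coeff_twist (ψ : G →* k) (f : MonoidAlgebra k G) (g : G) :
    (twist ψ f).coeff g = ψ g * f.coeff g := by
  classical
  induction f using induction_linear with
  | zero => simp
  | add f f' hf hf' => simp [hf, hf', mul_add]
  | single h a =>
    rw [twist_single, coeff_single, coeff_single, Finsupp.single_apply, Finsupp.single_apply]
    split_ifs with hgh <;> simp [hgh]

theorem lift_one_twist (ψ : G →* k) (f : MonoidAlgebra k G) :
    lift k k G 1 (twist ψ f) = lift k k G ψ f := by
  rw [← AlgHom.comp_apply]
  congr 1
  ext g
  simp [twist_single]

variable [Finite G] [IsDomain k] [HasEnoughRootsOfUnity k (Monoid.exponent G)]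

theorem eq_single_one_of_forall_twist_eq {f : MonoidAlgebra k G}
    (hf : ∀ ψ : G →* k, twist ψ f = f) : f = single 1 (f.coeff 1) := by
  classical
  ext g
  rw [coeff_single, Finsupp.single_apply]
  split_ifs with hg
  · rw [hg]
  obtain ⟨ψ, hψ⟩ := CommGroup.exists_apply_ne_one_of_hasEnoughRootsOfUnity G k (Ne.symm hg)
  have hfix : (ψ g : k) * f.coeff g = f.coeff g := by
    simpa [coeff_twist] using congr(($(hf ((Units.coeHom k).comp ψ))).coeff g)
  have hψ₁ : (ψ g : k) - 1 ≠ 0 := sub_ne_zero.2 (by simpa [Units.val_eq_one] using hψ)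
  exact (mul_eq_zero.1 (by linear_combination hfix)).resolve_left hψ₁

variable [Fintype (G →* k)]

theorem prod_twist_eq_smul_one (f : MonoidAlgebra k G) :
    ∏ χ : G →* k, twist χ f = (∏ χ : G →* k, lift k k G χ f) • 1 := by
  set P := ∏ χ : G →* k, twist χ f
  have hP : ∀ ψ : G →* k, twist ψ P = P := fun ψ => by
    simp only [P, map_prod, twist_twist]
    exact Equiv.prod_comp (Units.mulRight ψ.isUnit.unit) fun χ => twist χ f
  have hP₁ := eq_single_one_of_forall_twist_eq hP
  calc P = single 1 (P.coeff 1) := hP₁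
    _ = lift k k G 1 P • 1 := by
      conv_rhs => rw [hP₁]
      rw [lift_single, one_def, smul_single']
      simp
    _ = _ := by simp only [P, map_prod, lift_one_twist]

theorem mul_prod_twist_erase_one [DecidableEq (G →* k)] (f : MonoidAlgebra k G) :
    f * ∏ χ ∈ Finset.univ.erase 1, twist χ f = (∏ χ : G →* k, lift k k G χ f) • 1 := by
  rw [← prod_twist_eq_smul_one]
  conv_lhs => enter [1]; rw [← AlgHom.id_apply (R := k) f, ← twist_one]
  exact Finset.mul_prod_erase _ (fun χ => twist χ f) (Finset.mem_univ 1)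

end MonoidAlgebra

/-- Inverse element formula in the group algebra of a finite abelian group:
if `Θ(G) = ∏_χ Σ_g χ(g) x_g ≠ 0`, then `Σ_g x_g g` is invertible with inverse
`Θ(G)⁻¹ • ∏_{χ ≠ χ₁} (Σ_g χ(g) x_g g)`. -/
theorem inverse_formula_abelian_group_algebra
    (G : Type) [CommGroup G] [Fintype G] [Fintype (G →* ℂ)] [DecidableEq (G →* ℂ)]
    (x : G → ℂ)
    (hΘ : (∏ χ : G →* ℂ, ∑ g : G, χ g * x g) ≠ 0) :
    (∑ g : G, (MonoidAlgebra.single g (x g) : MonoidAlgebra ℂ G)) *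
      ((∏ χ : G →* ℂ, ∑ g : G, χ g * x g)⁻¹ •
        ∏ χ ∈ Finset.univ.erase (1 : G →* ℂ),
          (∑ g : G, (MonoidAlgebra.single g (χ g * x g) : MonoidAlgebra ℂ G))) = 1 ∧
    ((∏ χ : G →* ℂ, ∑ g : G, χ g * x g)⁻¹ •
        ∏ χ ∈ Finset.univ.erase (1 : G →* ℂ),
          (∑ g : G, (MonoidAlgebra.single g (χ g * x g) : MonoidAlgebra ℂ G))) *
      (∑ g : G, (MonoidAlgebra.single g (x g) : MonoidAlgebra ℂ G)) = 1 := by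
  set α : MonoidAlgebra ℂ G := ∑ g : G, MonoidAlgebra.single g (x g)
  have hβ (χ : G →* ℂ) :
      ∑ g : G, MonoidAlgebra.single g (χ g * x g) = MonoidAlgebra.twist χ α := by
    simp [α, map_sum, MonoidAlgebra.twist_single]
  have hΘα : ∏ χ : G →* ℂ, ∑ g : G, χ g * x g = ∏ χ : G →* ℂ, MonoidAlgebra.lift ℂ ℂ G χ α := by
    simp [α, map_sum, MonoidAlgebra.lift_single, mul_comm]
  simp only [hβ, hΘα] at hΘ ⊢
  have hright : α * ((∏ χ : G →* ℂ, MonoidAlgebra.lift ℂ ℂ G χ α)⁻¹ •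
      ∏ χ ∈ Finset.univ.erase 1, MonoidAlgebra.twist χ α) = 1 := by
    rw [mul_smul_comm, MonoidAlgebra.mul_prod_twist_erase_one, smul_smul, inv_mul_cancel₀ hΘ,
      one_smul]
  exact ⟨hright, (mul_comm _ _).trans hright⟩
end

section
/- Let G be D_m or Q_m. The group determinant factors as Θ(G) = ∏_{χ'∈⟨a⟩^} Σ_{g∈⟨a⟩} χ'(g) A_g, a product over all characters χ' of the cyclic subgroup ⟨a⟩, where A_h = Σ_{g∈⟨a⟩}(x_g x_{hg} − x_{gb} x_{hgb^{-1}}). In particular, Θ(G) is the circulant determinant in the quantities A_{a^k}. -/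
/-!
Listing `G` as `⟨a⟩` followed by the coset `⟨a⟩b` turns the group matrix into a `2 × 2` block
matrix of circulants over `⟨a⟩ ≅ ZMod N`. The character matrix `(ω^{lk})` of `ZMod N` is a
Vandermonde matrix in a primitive root, hence invertible, and it diagonalises every circulant at
once; so `Θ(G)` is the product over the characters `χ` of the `2 × 2` determinants
`v̂ ẑ - ŵ û` of the Fourier transforms of the four blocks. The Fourier transform turns convolution
into multiplication, and the convolution `v * z - w * u` is exactly `k ↦ A_{a^k}`.
-/

/-- `A_h` for the dihedral group `D_m`. -/
noncomputable def dihedralA (m : ℕ) [NeZero m] (x : DihedralGroup m → ℂ) (h : DihedralGroup m) : ℂ :=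
  ∑ i : ZMod m,
    (x (DihedralGroup.r i) * x (h * DihedralGroup.r i) -
      x (DihedralGroup.r i * DihedralGroup.sr 0) *
        x (h * DihedralGroup.r i * (DihedralGroup.sr 0)⁻¹))

/-- `A_h` for the generalized quaternion group `Q_m`. -/
noncomputable def quaternionA (m : ℕ) [NeZero m] (x : QuaternionGroup m → ℂ) (h : QuaternionGroup m) : ℂ :=
  ∑ i : ZMod (2 * m),
    (x (QuaternionGroup.a i) * x (h * QuaternionGroup.a i) -
      x (QuaternionGroup.a i * QuaternionGroup.xa 0) *
        x (h * QuaternionGroup.a i * (QuaternionGroup.xa 0)⁻¹))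

open Matrix Finset

theorem det_fromBlocks_diagonal {R ι : Type*} [CommRing R] [Fintype ι] [DecidableEq ι]
    (a b c d : ι → R) :
    (fromBlocks (diagonal a) (diagonal b) (diagonal c) (diagonal d)).det
      = ∏ i, (a i * d i - b i * c i) := by
  let e : Fin 2 × ι ≃ ι ⊕ ι :=
    (finTwoEquiv.prodCongr (Equiv.refl ι)).trans (Equiv.boolProdEquivSum ι)
  have hblock : (fromBlocks (diagonal a) (diagonal b) (diagonal c) (diagonal d)).submatrix e e
      = blockDiagonal fun i => !![a i, b i; c i, d i] := by
    ext ⟨p, i⟩ ⟨q, j⟩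
    fin_cases p <;> fin_cases q <;> by_cases h : i = j <;>
      simp [e, blockDiagonal_apply, h, finTwoEquiv]
  rw [← det_submatrix_equiv_self e, hblock, det_blockDiagonal]
  simp only [det_fin_two_of]

section Circulant

variable {R G : Type*} [CommRing R] [AddCommGroup G] [Fintype G]

theorem AddChar.sum_mul_sum_eq_sum_conv (ψ : AddChar G R) (v w : G → R) :
    (∑ s, ψ s * v s) * (∑ s, ψ s * w s) = ∑ k, ψ k * ∑ s, v s * w (k - s) := by
  simp_rw [sum_mul_sum, mul_sum, ← Fintype.sum_prod_type']
  let e : G × G ≃ G × G :=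
    ⟨fun p => (p.1 + p.2, p.1), fun p => (p.2, p.1 - p.2), fun p => by simp, fun p => by simp⟩
  refine Fintype.sum_equiv e _ _ fun p => ?_
  simp only [e, Equiv.coe_fn_mk, AddChar.map_add_eq_mul, add_sub_cancel_left]
  ring

theorem of_addChar_mul_circulant {ι : Type*} [Fintype ι] [DecidableEq ι] (ψ : ι → AddChar G R)
    (v : G → R) :
    (of fun i j => ψ i j) * circulant v
      = diagonal (fun i => ∑ s, ψ i s * v s) * of fun i j => ψ i j := by
  ext i j
  rw [mul_apply, diagonal_mul, sum_mul]
  refine Fintype.sum_equiv (Equiv.subRight j) _ _ fun k => ?_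
  rw [of_apply, of_apply, circulant_apply, Equiv.subRight_apply, mul_right_comm,
    ← AddChar.map_add_eq_mul, sub_add_cancel]

theorem det_fromBlocks_circulant [IsDomain R] [DecidableEq G] (ψ : G → AddChar G R)
    (hψ : (of fun i j => ψ i j).det ≠ 0) (v w u z : G → R) :
    (fromBlocks (circulant v) (circulant w) (circulant u) (circulant z)).det
      = ∏ i, ∑ k, ψ i k * ∑ s, (v s * z (k - s) - w s * u (k - s)) := by
  set F := of fun i j => ψ i j
  set dft : (G → R) → G → R := fun v i => ∑ s, ψ i s * v s
  have hconj : fromBlocks F 0 0 F * fromBlocks (circulant v) (circulant w) (circulant u) (circulant z)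
      = fromBlocks (diagonal (dft v)) (diagonal (dft w)) (diagonal (dft u)) (diagonal (dft z))
        * fromBlocks F 0 0 F := by
    simp only [fromBlocks_multiply, of_addChar_mul_circulant, Matrix.zero_mul, Matrix.mul_zero,
      add_zero, zero_add, F, dft]
  have hF : (fromBlocks F 0 0 F).det ≠ 0 := by
    rw [det_fromBlocks_zero₂₁]
    exact mul_ne_zero hψ hψ
  have hdet := congrArg det hconj
  rw [det_mul, det_mul, mul_comm _ (fromBlocks F 0 0 F).det] at hdet
  rw [mul_left_cancel₀ hF hdet, det_fromBlocks_diagonal]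
  refine prod_congr rfl fun i _ => ?_
  simp only [dft, AddChar.sum_mul_sum_eq_sum_conv, ← sum_sub_distrib, ← mul_sub]

end Circulant

section ZMod

variable {R : Type*} [CommRing R] [IsDomain R] {n : ℕ} [NeZero n]

theorem ZMod.val_finEquiv (i : Fin n) : (ZMod.finEquiv n i).val = i := by
  obtain ⟨k, rfl⟩ := Nat.exists_eq_succ_of_ne_zero (NeZero.ne n)
  rfl

theorem ZMod.prod_val_eq_prod_range {M : Type*} [CommMonoid M] (f : ℕ → M) :
    ∏ k : ZMod n, f k.val = ∏ l ∈ range n, f l := by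
  rw [← Fin.prod_univ_eq_prod_range]
  exact (Fintype.prod_equiv (ZMod.finEquiv n).toEquiv _ _ fun i => by
    rw [RingEquiv.toEquiv_eq_coe, RingEquiv.coe_toEquiv, ZMod.val_finEquiv]).symm

theorem det_of_pow_val_mul_val_ne_zero {ω : R} (hω : IsPrimitiveRoot ω n) :
    (of fun i j : ZMod n => ω ^ (i.val * j.val)).det ≠ 0 := by
  let e := (ZMod.finEquiv n).toEquiv
  have hV : (of fun i j : ZMod n => ω ^ (i.val * j.val)).submatrix e e
      = vandermonde fun i : Fin n => ω ^ (i : ℕ) := by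
    ext i j
    simp [e, vandermonde, ZMod.val_finEquiv, pow_mul]
  rw [← det_submatrix_equiv_self e, hV, det_vandermonde_ne_zero_iff]
  exact fun i j h => Fin.ext (hω.pow_inj i.isLt j.isLt h)

theorem det_fromBlocks_circulant_zmod {ω : R} (hω : IsPrimitiveRoot ω n) (v w u z : ZMod n → R) :
    (fromBlocks (circulant v) (circulant w) (circulant u) (circulant z)).det
      = ∏ l ∈ range n, ∑ k : ZMod n, ω ^ (l * k.val) * ∑ s, (v s * z (k - s) - w s * u (k - s)) := by
  have hroot (l : ZMod n) : (ω ^ l.val) ^ n = 1 := by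
    rw [← pow_mul, mul_comm, pow_mul, hω.pow_eq_one, one_pow]
  let ψ (l : ZMod n) : AddChar (ZMod n) R := AddChar.zmodChar n (hroot l)
  have hψ (l k : ZMod n) : ψ l k = ω ^ (l.val * k.val) := (pow_mul ω _ _).symm
  simp only [← ZMod.prod_val_eq_prod_range, ← hψ]
  exact det_fromBlocks_circulant ψ (by simpa only [hψ] using det_of_pow_val_mul_val_ne_zero hω)
    v w u z

end ZMod

namespace DihedralGroup

variable {m : ℕ}

def sumEquiv (m : ℕ) : ZMod m ⊕ ZMod m ≃ DihedralGroup m where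
  toFun := Sum.elim r sr
  invFun
    | r i => .inl i
    | sr i => .inr i
  left_inv := by rintro (i | i) <;> rfl
  right_inv := by rintro (i | i) <;> rfl

theorem submatrix_sumEquiv {α : Type*} (x : DihedralGroup m → α) :
    (of fun g h : DihedralGroup m => x (g * h⁻¹)).submatrix (sumEquiv m) (sumEquiv m)
      = fromBlocks (circulant fun t => x (r t)) (circulant fun t => x (sr (-t)))
          (circulant fun t => x (sr t)) (circulant fun t => x (r (-t))) := by
  ext (i | i) (j | j) <;>
    simp only [sumEquiv, Equiv.coe_fn_mk, submatrix_apply, Sum.elim_inl, Sum.elim_inr, of_apply,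
      inv_r, inv_sr, r_mul_r, r_mul_sr, sr_mul_r, sr_mul_sr, fromBlocks_apply₁₁,
      fromBlocks_apply₁₂, fromBlocks_apply₂₁, fromBlocks_apply₂₂, circulant_apply] <;>
    congr 2 <;> abel

theorem dihedralA_r [NeZero m] (x : DihedralGroup m → ℂ) (k : ZMod m) :
    dihedralA m x (r k) = ∑ s, (x (r s) * x (r (-(k - s))) - x (sr (-s)) * x (sr (k - s))) := by
  refine Fintype.sum_equiv (Equiv.addRight k) _ _ fun s => ?_
  simp only [Equiv.coe_addRight, r_mul_r, r_mul_sr, inv_sr]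
  ring_nf

end DihedralGroup

namespace QuaternionGroup

variable {m : ℕ}

def sumEquiv (m : ℕ) : ZMod (2 * m) ⊕ ZMod (2 * m) ≃ QuaternionGroup m where
  toFun := Sum.elim a xa
  invFun
    | a i => .inl i
    | xa i => .inr i
  left_inv := by rintro (i | i) <;> rfl
  right_inv := by rintro (i | i) <;> rfl

theorem inv_a (i : ZMod (2 * m)) : (a i)⁻¹ = a (-i) := rfl

theorem inv_xa (i : ZMod (2 * m)) : (xa i)⁻¹ = xa ((m : ZMod (2 * m)) + i) := rfl

theorem submatrix_sumEquiv {α : Type*} (y : QuaternionGroup m → α) :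
    (of fun g h : QuaternionGroup m => y (g * h⁻¹)).submatrix (sumEquiv m) (sumEquiv m)
      = fromBlocks (circulant fun t => y (a t)) (circulant fun t => y (xa (m - t)))
          (circulant fun t => y (xa t)) (circulant fun t => y (a (-t))) := by
  have hm (t : ZMod (2 * m)) : (m : ZMod (2 * m)) + (m + t) = t := by
    rw [← add_assoc, ← Nat.cast_add, ← two_mul, ZMod.natCast_self, zero_add]
  ext (i | i) (j | j) <;>
    simp only [sumEquiv, Equiv.coe_fn_mk, submatrix_apply, Sum.elim_inl, Sum.elim_inr, of_apply,
      inv_a, inv_xa, a_mul_a, a_mul_xa, xa_mul_a, xa_mul_xa, hm, fromBlocks_apply₁₁,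
      fromBlocks_apply₁₂, fromBlocks_apply₂₁, fromBlocks_apply₂₂, circulant_apply] <;>
    congr 2 <;> ring

theorem quaternionA_a [NeZero m] (y : QuaternionGroup m → ℂ) (k : ZMod (2 * m)) :
    quaternionA m y (a k)
      = ∑ s, (y (a s) * y (a (-(k - s))) - y (xa (m - s)) * y (xa (k - s))) := by
  refine Fintype.sum_equiv (Equiv.addRight k) _ _ fun s => ?_
  simp only [Equiv.coe_addRight, a_mul_a, a_mul_xa, inv_xa]
  ring_nf

end QuaternionGroup

/-- For `G = D_m` or `Q_m`, the group determinant `Θ(G) = det(x_{gh⁻¹})_{g,h}` equals the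
circulant determinant `∏_{χ'∈⟨a⟩^} Σ_{g∈⟨a⟩} χ'(g) A_g`, the product running over all
characters `χ'_l(a^k) = ω^{lk}` of the cyclic subgroup `⟨a⟩`. -/
theorem group_det_eq_circulant_det (m : ℕ) [NeZero m]
    (ωD ωQ : ℂ) (hωD : IsPrimitiveRoot ωD m) (hωQ : IsPrimitiveRoot ωQ (2 * m))
    (x : DihedralGroup m → ℂ) (y : QuaternionGroup m → ℂ) :
    ((Matrix.of fun g h : DihedralGroup m => x (g * h⁻¹)).det =
      ∏ l ∈ Finset.range m,
        ∑ k : ZMod m, ωD ^ (l * k.val) * dihedralA m x (DihedralGroup.r k)) ∧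
    ((Matrix.of fun g h : QuaternionGroup m => y (g * h⁻¹)).det =
      ∏ l ∈ Finset.range (2 * m),
        ∑ k : ZMod (2 * m), ωQ ^ (l * k.val) * quaternionA m y (QuaternionGroup.a k)) := by
  constructor
  · rw [← det_submatrix_equiv_self (DihedralGroup.sumEquiv m), DihedralGroup.submatrix_sumEquiv,
      det_fromBlocks_circulant_zmod hωD]
    simp only [DihedralGroup.dihedralA_r]
  · rw [← det_submatrix_equiv_self (QuaternionGroup.sumEquiv m),
      QuaternionGroup.submatrix_sumEquiv, det_fromBlocks_circulant_zmod hωQ]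
    simp only [QuaternionGroup.quaternionA_a]
end
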